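/- Let A, Θ : [0, ∞) → matrices be bounded measurable, with A n × n and Θ m × n, B n × m bounded measurable, and let Φ_Θ solve Φ'(t) = (A(t) + B(t)Θ(t))Φ(t), Φ(0) = I with estimate |Φ_Θ(t)Φ_Θ(s)^{-1}| ≤ K e^{-λ(t-s)} for 0 ≤ s ≤ t. Suppose h : [0, T] → ℝⁿ satisfies the terminal-value linear ODE h'(t) + (A(t) + B(t)Θ(t))ᵀ h(t) + l(t) = 0, h(T) = h_T, with |h_T| ≤ K₀ and |l(t)| ≤ K₀ e^{-λ(T-t)}(|h(t)| + 1). Then there exist constants K', λ' > 0 depending only on K, K₀, λ such that |h(t)| ≤ K' e^{-λ'(T-t)} for all t ∈ [0, T]. -/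

import Mathlib

/-!
Put `Ψ(s) = Φ(s) Φ(t)⁻¹`; it solves the closed-loop equation with `Ψ(t) = 1`, so `s ↦ Ψ(s)ᵀ h(s)`
has derivative `-Ψ(s)ᵀ l(s)` and `h(t) = Ψ(T)ᵀ h_T + ∫ₜᵀ Ψ(s)ᵀ l(s) ds`. The decay of `Ψ` and of
`l` combine into `|h(t)| ≤ a e^{-λ(T-t)} (1 + ∫ₜᵀ (|h| + 1))` with `a = n K K₀` (the factor `n`
pays for transposing under the sup norm). The integrating factor `exp ((a/λ) e^{-λ(T-t)})` lies
between `1` and `e^{a/λ}` whatever `T` is, and turns this into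
`|h(t)| ≤ a e^{a/λ} (1 + T - t) e^{-λ(T-t)}`; halving the rate absorbs the factor `1 + T - t`.
That `Φ(t)` is invertible at all is backward uniqueness for a linear ODE, via Gronwall.
-/

open Matrix Set Real

theorem le_mul_exp_of_le_mul_one_add_integral {u : ℝ → ℝ} {a lam t T : ℝ} (ha : 0 ≤ a)
    (hlam : 0 < lam) (htT : t ≤ T) (hu : ContinuousOn u (Icc t T))
    (hle : ∀ s ∈ Icc t T, u s ≤ a * exp (-lam * (T - s)) * (1 + ∫ r in s..T, (u r + 1))) :
    u t ≤ a * exp (a / lam) * (1 + (T - t)) * exp (-lam * (T - t)) := by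
  set V : ℝ → ℝ := fun s => 1 + ∫ r in s..T, (u r + 1)
  set E : ℝ → ℝ := fun s => exp (a / lam * exp (-lam * (T - s)))
  -- `E` is an integrating factor for `V' ≥ -(a e^{-λ(T-s)} V + 1)`
  set ψ : ℝ → ℝ := fun s => V s * E s + exp (a / lam) * s
  have hf : ContinuousOn (fun r => u r + 1) (Icc t T) := hu.add continuousOn_const
  have hE_le : ∀ s ≤ T, E s ≤ exp (a / lam) := fun s hs =>
    exp_le_exp.2 (mul_le_of_le_one_right (by positivity) (exp_le_one_iff.2 (by nlinarith)))
  have hψ_mono : MonotoneOn ψ (Icc t T) := by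
    have hV : ContinuousOn V (Icc t T) := by
      have hint := hf.integrableOn_compact (μ := MeasureTheory.volume) isCompact_Icc
      rw [← uIcc_of_le htT] at hint ⊢
      exact continuousOn_const.add (intervalIntegral.continuousOn_primitive_interval_left hint)
    refine monotoneOn_of_hasDerivWithinAt_nonneg
      (f' := fun s => -(u s + 1) * E s + V s * (a * exp (-lam * (T - s)) * E s) + exp (a / lam))
      (convex_Icc t T) ((hV.mul (by fun_prop)).add (by fun_prop)) (fun s hs => ?_)
      (fun s hs => ?_) <;> rw [interior_Icc] at hs
    · have hVd : HasDerivAt V (-(u s + 1)) s :=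
        (intervalIntegral.integral_hasDerivAt_left
          ((hf.mono (Icc_subset_Icc hs.1.le le_rfl)).intervalIntegrable_of_Icc hs.2.le)
          ((hf.mono Ioo_subset_Icc_self).stronglyMeasurableAtFilter isOpen_Ioo s hs)
          (hf.continuousAt (Icc_mem_nhds hs.1 hs.2))).const_add 1
      have hEd : HasDerivAt E (a * exp (-lam * (T - s)) * E s) s := by
        refine ((((hasDerivAt_id s).const_sub T).const_mul (-lam)).exp.const_mul (a / lam)).exp
          |>.congr_deriv ?_
        simp only [id, E]
        field_simp
      exact (((hVd.mul hEd).add ((hasDerivAt_id s).const_mul _)).congr_deriv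
        (by simp)).hasDerivWithinAt
    · have hu_le := hle s (Ioo_subset_Icc_self hs)
      calc (0 : ℝ) ≤ E s * (a * exp (-lam * (T - s)) * V s - u s) + (exp (a / lam) - E s) :=
            add_nonneg (mul_nonneg (exp_pos _).le (sub_nonneg.2 hu_le))
              (sub_nonneg.2 (hE_le s hs.2.le))
        _ = _ := by ring
  have hVE : V t * E t ≤ exp (a / lam) * (1 + (T - t)) := by
    have hψ : ψ t ≤ ψ T := hψ_mono (left_mem_Icc.2 htT) (right_mem_Icc.2 htT) htT
    simp only [ψ, V, E, intervalIntegral.integral_same, sub_self, mul_zero, exp_zero,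
      mul_one] at hψ
    linarith
  have hV_le : V t ≤ exp (a / lam) * (1 + (T - t)) := by
    rcases le_or_gt (V t) 0 with hneg | hpos
    · exact hneg.trans (mul_nonneg (exp_pos _).le (by linarith))
    · exact (le_mul_of_one_le_right hpos.le (one_le_exp (by positivity))).trans hVE
  calc u t ≤ a * exp (-lam * (T - t)) * V t := hle t (left_mem_Icc.2 htT)
    _ ≤ a * exp (-lam * (T - t)) * (exp (a / lam) * (1 + (T - t))) := by gcongr
    _ = _ := by ring

theorem one_add_mul_exp_neg_le {lam τ : ℝ} (hlam : 0 < lam) (hτ : 0 ≤ τ) :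
    (1 + τ) * exp (-lam * τ) ≤ (1 + 2 / lam) * exp (-(lam / 2) * τ) := by
  have hτ_le : τ ≤ 2 / lam * exp (lam / 2 * τ) :=
    calc τ ≤ 2 / lam * (lam / 2 * τ + 1) := by field_simp; linarith
      _ ≤ _ := by gcongr; exact add_one_le_exp _
  have h_one : 1 ≤ exp (lam / 2 * τ) := one_le_exp (by positivity)
  calc (1 + τ) * exp (-lam * τ) ≤ (1 + 2 / lam) * exp (lam / 2 * τ) * exp (-lam * τ) := by
        gcongr; linarith
    _ = (1 + 2 / lam) * exp (-(lam / 2) * τ) := by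
        rw [mul_assoc, ← exp_add]; ring_nf

namespace Matrix

variable {m n : Type*} [Fintype n]

theorem norm_mulVec_le_of_abs_le [Fintype m] (N : Matrix m n ℝ) {c : ℝ} (hc : 0 ≤ c)
    (hN : ∀ i j, |N i j| ≤ c) (x : n → ℝ) : ‖N *ᵥ x‖ ≤ Fintype.card n * c * ‖x‖ := by
  refine (pi_norm_le_iff_of_nonneg (by positivity)).2 fun i => ?_
  calc ‖(N *ᵥ x) i‖ ≤ ∑ j, ‖N i j * x j‖ := norm_sum_le _ _
    _ ≤ ∑ _j : n, c * ‖x‖ := by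
        gcongr with j
        rw [norm_mul, Real.norm_eq_abs]
        exact mul_le_mul (hN i j) (norm_le_pi_norm x j) (norm_nonneg _) hc
    _ = Fintype.card n * c * ‖x‖ := by simp [mul_assoc]

theorem abs_le_of_norm_mulVec_le [Fintype m] [DecidableEq n] {N : Matrix m n ℝ} {c : ℝ}
    (hN : ∀ x, ‖N *ᵥ x‖ ≤ c * ‖x‖) (i : m) (j : n) : |N i j| ≤ c :=
  calc |N i j| = ‖(N *ᵥ Pi.single j 1) i‖ := by simp
    _ ≤ ‖N *ᵥ Pi.single j 1‖ := norm_le_pi_norm _ i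
    _ ≤ c := by simpa [Pi.norm_single] using hN (Pi.single j 1)

theorem norm_transpose_mulVec_le [Fintype m] [DecidableEq n] {N : Matrix m n ℝ} {c : ℝ}
    (hc : 0 ≤ c) (hN : ∀ x, ‖N *ᵥ x‖ ≤ c * ‖x‖) (x : m → ℝ) :
    ‖Nᵀ *ᵥ x‖ ≤ Fintype.card m * c * ‖x‖ :=
  norm_mulVec_le_of_abs_le _ hc (fun i j => abs_le_of_norm_mulVec_le hN j i) x

theorem exists_norm_add_mul_mulVec_le [Fintype m] {A : ℝ → Matrix n n ℝ}
    {B : ℝ → Matrix n m ℝ} {Θ : ℝ → Matrix m n ℝ} (hA : ∃ C, ∀ t i j, |A t i j| ≤ C)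
    (hB : ∃ C, ∀ t i j, |B t i j| ≤ C) (hΘ : ∃ C, ∀ t i j, |Θ t i j| ≤ C) :
    ∃ C, ∀ t x, ‖(A t + B t * Θ t) *ᵥ x‖ ≤ C * ‖x‖ := by
  obtain ⟨CA, hA⟩ := hA
  obtain ⟨CB, hB⟩ := hB
  obtain ⟨CΘ, hΘ⟩ := hΘ
  refine ⟨Fintype.card n * |CA| + Fintype.card m * |CB| * (Fintype.card n * |CΘ|),
    fun t x => ?_⟩
  have hAx := norm_mulVec_le_of_abs_le (A t) (abs_nonneg CA)
    (fun i j => (hA t i j).trans (le_abs_self _)) x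
  have hΘx := norm_mulVec_le_of_abs_le (Θ t) (abs_nonneg CΘ)
    (fun i j => (hΘ t i j).trans (le_abs_self _)) x
  have hBΘx := norm_mulVec_le_of_abs_le (B t) (abs_nonneg CB)
    (fun i j => (hB t i j).trans (le_abs_self _)) (Θ t *ᵥ x)
  calc ‖(A t + B t * Θ t) *ᵥ x‖ ≤ ‖A t *ᵥ x‖ + ‖B t *ᵥ Θ t *ᵥ x‖ := by
        rw [add_mulVec, ← mulVec_mulVec]; exact norm_add_le _ _
    _ ≤ Fintype.card n * |CA| * ‖x‖
        + Fintype.card m * |CB| * (Fintype.card n * |CΘ| * ‖x‖) :=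
        add_le_add hAx (hBΘx.trans (by gcongr))
    _ = _ := by ring

theorem hasDerivAt_mulVec {N : ℝ → Matrix m n ℝ} {N' : Matrix m n ℝ} {x : ℝ → n → ℝ}
    {x' : n → ℝ} {t : ℝ} (hN : ∀ i j, HasDerivAt (fun s => N s i j) (N' i j) t)
    (hx : HasDerivAt x x' t) :
    HasDerivAt (fun s => N s *ᵥ x s) (N' *ᵥ x t + N t *ᵥ x') t := by
  refine hasDerivAt_pi.2 fun i => ?_
  simp only [mulVec, dotProduct, Pi.add_apply, ← Finset.sum_add_distrib]
  exact HasDerivAt.fun_sum fun j _ => (hN i j).mul (hasDerivAt_pi.1 hx j)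

theorem hasDerivAt_mul_apply {l : Type*} {Φ : ℝ → Matrix m n ℝ} {Φ' : Matrix m n ℝ} {t : ℝ}
    (hΦ : ∀ i j, HasDerivAt (fun s => Φ s i j) (Φ' i j) t) (P : Matrix n l ℝ) (i : m) (j : l) :
    HasDerivAt (fun s => (Φ s * P) i j) ((Φ' * P) i j) t := by
  simp only [mul_apply]
  exact HasDerivAt.fun_sum fun k _ => (hΦ i k).mul_const (P k j)

theorem isUnit_det_of_hasDerivAt [DecidableEq n] {M Φ : ℝ → Matrix n n ℝ} {C : ℝ}
    (hM : ∀ t x, ‖M t *ᵥ x‖ ≤ C * ‖x‖)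
    (hΦ : ∀ t i j, HasDerivAt (fun s => Φ s i j) ((M t * Φ t) i j) t) (hΦ0 : Φ 0 = 1)
    {t : ℝ} (ht : 0 ≤ t) : IsUnit (Φ t).det := by
  rw [isUnit_iff_ne_zero]
  intro hdet
  obtain ⟨v, hv0, hv⟩ := exists_mulVec_eq_zero_iff.2 hdet
  have hu : ∀ s, HasDerivAt (fun s => Φ (t - s) *ᵥ v) (-(M (t - s) *ᵥ (Φ (t - s) *ᵥ v))) s :=
    fun s => (hasDerivAt_mulVec (N' := -(M (t - s) * Φ (t - s)))
      (fun i j => (hΦ (t - s) i j).comp_const_sub t s)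
      (hasDerivAt_const s v)).congr_deriv (by simp [neg_mulVec, mulVec_mulVec])
  have h0 : ‖Φ (t - 0) *ᵥ v‖ ≤ 0 := by rw [sub_zero, hv, norm_zero]
  have hbound : ∀ s ∈ Ico 0 t,
      ‖-(M (t - s) *ᵥ (Φ (t - s) *ᵥ v))‖ ≤ C * ‖Φ (t - s) *ᵥ v‖ + 0 :=
    fun s _ => by rw [norm_neg, add_zero]; exact hM _ _
  have hgron := norm_le_gronwallBound_of_norm_deriv_right_le
    (fun s _ => (hu s).continuousAt.continuousWithinAt) (fun s _ => (hu s).hasDerivWithinAt)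
    h0 hbound t (right_mem_Icc.2 ht)
  rw [gronwallBound_ε0_δ0, sub_self, hΦ0, one_mulVec, norm_le_zero_iff] at hgron
  exact hv0 hgron

theorem eq_transpose_mulVec_add_integral [DecidableEq n] {M Ψ : ℝ → Matrix n n ℝ}
    {h l : ℝ → n → ℝ} {t T : ℝ} (htT : t ≤ T)
    (hΨ : ∀ s i j, HasDerivAt (fun r => Ψ r i j) ((M s * Ψ s) i j) s) (hΨt : Ψ t = 1)
    (hl : Continuous l) (hh : ∀ s ∈ Icc t T, HasDerivAt h (-((M s)ᵀ *ᵥ h s + l s)) s) :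
    h t = (Ψ T)ᵀ *ᵥ h T + ∫ s in t..T, (Ψ s)ᵀ *ᵥ l s := by
  have hg : ∀ s ∈ uIcc t T, HasDerivAt (fun r => (Ψ r)ᵀ *ᵥ h r) (-((Ψ s)ᵀ *ᵥ l s)) s := by
    intro s hs
    rw [uIcc_of_le htT] at hs
    refine (hasDerivAt_mulVec (N := fun r => (Ψ r)ᵀ) (N' := (M s * Ψ s)ᵀ) (fun i j => hΨ s j i)
      (hh s hs)).congr_deriv ?_
    rw [transpose_mul, ← mulVec_mulVec, mulVec_neg, mulVec_add]
    abel
  have hΨc : Continuous Ψ := continuous_matrix fun i j =>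
    continuous_iff_continuousAt.2 fun s => (hΨ s i j).continuousAt
  have hftc := intervalIntegral.integral_eq_sub_of_hasDerivAt hg
    ((hΨc.matrix_transpose.matrix_mulVec hl).neg.intervalIntegrable t T)
  rw [intervalIntegral.integral_neg, hΨt, transpose_one, one_mulVec] at hftc
  linear_combination (norm := module) hftc

theorem norm_le_mul_one_add_integral [DecidableEq n] {M Φ : ℝ → Matrix n n ℝ}
    {h l : ℝ → n → ℝ} {K K₀ lam t T : ℝ} (hK : 0 ≤ K) (htT : t ≤ T)
    (hΦ : ∀ s i j, HasDerivAt (fun r => Φ r i j) ((M s * Φ s) i j) s) (hΦt : IsUnit (Φ t).det)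
    (hΦK : ∀ s ∈ Icc t T, ∀ x, ‖(Φ s * (Φ t)⁻¹) *ᵥ x‖ ≤ K * exp (-lam * (s - t)) * ‖x‖)
    (hl : Continuous l) (hh : ∀ s ∈ Icc t T, HasDerivAt h (-((M s)ᵀ *ᵥ h s + l s)) s)
    (hhT : ‖h T‖ ≤ K₀)
    (hlK : ∀ s ∈ Icc t T, ‖l s‖ ≤ K₀ * exp (-lam * (T - s)) * (‖h s‖ + 1)) :
    ‖h t‖ ≤ Fintype.card n * K * K₀ * exp (-lam * (T - t)) * (1 + ∫ s in t..T, (‖h s‖ + 1)) := by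
  set Ψ : ℝ → Matrix n n ℝ := fun s => Φ s * (Φ t)⁻¹
  have hΨ : ∀ s i j, HasDerivAt (fun r => Ψ r i j) ((M s * Ψ s) i j) s := fun s i j => by
    simpa only [Ψ, Matrix.mul_assoc] using hasDerivAt_mul_apply (hΦ s) (Φ t)⁻¹ i j
  have hΨK : ∀ s ∈ Icc t T, ∀ x,
      ‖(Ψ s)ᵀ *ᵥ x‖ ≤ Fintype.card n * (K * exp (-lam * (s - t))) * ‖x‖ :=
    fun s hs => norm_transpose_mulVec_le (by positivity) (hΦK s hs)
  have hh_cont : ContinuousOn h (Icc t T) := fun s hs =>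
    (hh s hs).continuousAt.continuousWithinAt
  rw [eq_transpose_mulVec_add_integral htT hΨ (mul_nonsing_inv _ hΦt) hl hh]
  set a := Fintype.card n * K * K₀ * exp (-lam * (T - t))
  have h_terminal : ‖(Ψ T)ᵀ *ᵥ h T‖ ≤ a :=
    calc _ ≤ Fintype.card n * (K * exp (-lam * (T - t))) * ‖h T‖ :=
          hΨK T (right_mem_Icc.2 htT) _
      _ ≤ Fintype.card n * (K * exp (-lam * (T - t))) * K₀ := by gcongr
      _ = a := by ring
  have h_forcing : ‖∫ s in t..T, (Ψ s)ᵀ *ᵥ l s‖ ≤ ∫ s in t..T, a * (‖h s‖ + 1) := by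
    refine intervalIntegral.norm_integral_le_of_norm_le htT (.of_forall fun s hs => ?_)
      (((hh_cont.norm.add continuousOn_const).intervalIntegrable_of_Icc htT).const_mul a)
    have hs' := Ioc_subset_Icc_self hs
    calc ‖(Ψ s)ᵀ *ᵥ l s‖ ≤ Fintype.card n * (K * exp (-lam * (s - t))) * ‖l s‖ := hΨK s hs' _
      _ ≤ Fintype.card n * (K * exp (-lam * (s - t)))
          * (K₀ * exp (-lam * (T - s)) * (‖h s‖ + 1)) := by gcongr; exact hlK s hs'
      _ = a * (‖h s‖ + 1) := by
          simp only [a]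
          rw [show -lam * (T - t) = -lam * (s - t) + -lam * (T - s) by ring, exp_add]
          ring
  calc _ ≤ ‖(Ψ T)ᵀ *ᵥ h T‖ + ‖∫ s in t..T, (Ψ s)ᵀ *ᵥ l s‖ := norm_add_le _ _
    _ ≤ a + ∫ s in t..T, a * (‖h s‖ + 1) := add_le_add h_terminal h_forcing
    _ = a * (1 + ∫ s in t..T, (‖h s‖ + 1)) := by rw [intervalIntegral.integral_const_mul]; ring

end Matrix

/-- Exponential turnpike estimate for the terminal-value linear ODE
`h' + (A + BΘ)ᵀ h + l = 0`, `h(T) = h_T`, with an exponentially stable closed-loop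
transition matrix and an exponentially localized forcing term: the constants in
the conclusion depend only on `K, K₀, λ` (and the dimensions), not on `T`. -/
theorem stmt_11 {n m : ℕ} (K K₀ lam : ℝ) (hK : 0 < K) (hK₀ : 0 < K₀) (hlam : 0 < lam) :
    ∃ K' > (0:ℝ), ∃ lam' > (0:ℝ), ∀ T : ℝ, 0 < T →
      ∀ (A : ℝ → Matrix (Fin n) (Fin n) ℝ) (B : ℝ → Matrix (Fin n) (Fin m) ℝ)
        (Θ : ℝ → Matrix (Fin m) (Fin n) ℝ),
      (∀ i j, Measurable fun t => A t i j) →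
      (∀ i j, Measurable fun t => B t i j) →
      (∀ i j, Measurable fun t => Θ t i j) →
      (∃ C : ℝ, ∀ (t : ℝ) (i j : Fin n), |A t i j| ≤ C) →
      (∃ C : ℝ, ∀ (t : ℝ) (i : Fin n) (j : Fin m), |B t i j| ≤ C) →
      (∃ C : ℝ, ∀ (t : ℝ) (i : Fin m) (j : Fin n), |Θ t i j| ≤ C) →
      ∀ Φ : ℝ → Matrix (Fin n) (Fin n) ℝ,
      (∀ (t : ℝ) (i j : Fin n),
        HasDerivAt (fun s => Φ s i j) (((A t + B t * Θ t) * Φ t) i j) t) →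
      Φ 0 = 1 →
      (∀ s t : ℝ, 0 ≤ s → s ≤ t → ∀ x : Fin n → ℝ,
        ‖(Φ t * (Φ s)⁻¹).mulVec x‖ ≤ K * Real.exp (-lam * (t - s)) * ‖x‖) →
      ∀ (h l : ℝ → (Fin n → ℝ)) (hT : Fin n → ℝ),
      Continuous l →
      (∀ t ∈ Set.Icc (0:ℝ) T,
        HasDerivAt h (-((A t + B t * Θ t)ᵀ.mulVec (h t) + l t)) t) →
      h T = hT → ‖hT‖ ≤ K₀ →
      (∀ t ∈ Set.Icc (0:ℝ) T,
        ‖l t‖ ≤ K₀ * Real.exp (-lam * (T - t)) * (‖h t‖ + 1)) →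
      ∀ t ∈ Set.Icc (0:ℝ) T, ‖h t‖ ≤ K' * Real.exp (-lam' * (T - t)) := by
  set a : ℝ := n * K * K₀
  -- `a + 1` rather than `a` keeps `K'` positive when `n = 0`
  refine ⟨(a + 1) * exp (a / lam) * (1 + 2 / lam), by positivity, lam / 2, by positivity, ?_⟩
  rintro T - A B Θ - - - hA hB hΘ Φ hΦ hΦ0 hΦK h l _ hl hh rfl hhT hlK t ht
  obtain ⟨C, hM⟩ := exists_norm_add_mul_mulVec_le hA hB hΘ
  have hkey : ∀ s ∈ Icc t T,
      ‖h s‖ ≤ a * exp (-lam * (T - s)) * (1 + ∫ r in s..T, (‖h r‖ + 1)) := fun s hs => by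
    have hs0 : 0 ≤ s := ht.1.trans hs.1
    have hsub : Icc s T ⊆ Icc 0 T := Icc_subset_Icc hs0 le_rfl
    simpa using norm_le_mul_one_add_integral hK.le hs.2 hΦ
      (isUnit_det_of_hasDerivAt hM hΦ hΦ0 hs0) (fun r hr => hΦK s r hs0 hr.1) hl
      (fun r hr => hh r (hsub hr)) hhT (fun r hr => hlK r (hsub hr))
  have hcont : ContinuousOn (fun s => ‖h s‖) (Icc t T) := fun s hs =>
    (hh s ⟨ht.1.trans hs.1, hs.2⟩).continuousAt.norm.continuousWithinAt
  calc ‖h t‖ ≤ a * exp (a / lam) * ((1 + (T - t)) * exp (-lam * (T - t))) :=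
        (le_mul_exp_of_le_mul_one_add_integral (by positivity) hlam ht.2 hcont hkey).trans_eq
          (by ring)
    _ ≤ (a + 1) * exp (a / lam) * ((1 + 2 / lam) * exp (-(lam / 2) * (T - t))) :=
        mul_le_mul (by gcongr; linarith) (one_add_mul_exp_neg_le hlam (sub_nonneg.2 ht.2))
          (mul_nonneg (by linarith [ht.2]) (exp_pos _).le) (by positivity)
    _ = _ := by ring
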